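/- arXiv:math/0511308 — 4 statements merged into one kernel-verified Lean document; each statement's English description precedes it below -/
import Mathlib

section
/- Let t ≥ 1, q ≤ c be positive integers and s_q, ..., s_c natural numbers with s_c > 0 satisfying the equality N(3,t−1) = ∑_{j=q}^{c} N(3, j−t+1) s_j (where N(3,d) = C(d+2,2) and N(3,d)=0 for d<0). Then t(t+1) ≤ ∑_{j=q}^{c} (j−t+2)(j−t+3) s_j. -/
/-- N(3,d) = (d+1)(d+2)/2 for d ≥ 0, and 0 for d < 0. -/
def N3 (d : ℤ) : ℤ := if 0 ≤ d then (d + 1) * (d + 2) / 2 else 0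

lemma consec_nonneg (a : ℤ) : 0 ≤ a * (a + 1) := by
  rcases le_or_gt 0 a with h | h
  · exact mul_nonneg h (by linarith)
  · nlinarith

/-- If N(3,t−1) = ∑_{j=q}^{c} N(3, j−t+1) s_j, then
    t(t+1) ≤ ∑_{j=q}^{c} (j−t+2)(j−t+3) s_j. -/
theorem extremely_compressed_lower (t q c : ℤ) (s : ℤ → ℕ)
    (ht : 1 ≤ t) (hq : 1 ≤ q) (hqc : q ≤ c) (hsc : 0 < s c)
    (hyp : N3 (t - 1) = ∑ j ∈ Finset.Icc q c, N3 (j - t + 1) * (s j : ℤ)) :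
    t * (t + 1) ≤ ∑ j ∈ Finset.Icc q c, (j - t + 2) * (j - t + 3) * (s j : ℤ) := by
  have key : ∀ j ∈ Finset.Icc q c,
      2 * (N3 (j - t + 1) * (s j : ℤ)) ≤ (j - t + 2) * (j - t + 3) * (s j : ℤ) := by
    intro j _
    by_cases h : 0 ≤ j - t + 1
    · have he : (2:ℤ) ∣ (j - t + 1 + 1) * (j - t + 1 + 2) := by
        rcases Int.even_mul_succ_self (j - t + 1 + 1) with ⟨k, hk⟩
        exact ⟨k, by linarith⟩
      simp only [N3, if_pos h]
      rw [← mul_assoc, Int.mul_ediv_cancel' he]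
      have : (j - t + 1 + 1) * (j - t + 1 + 2) = (j - t + 2) * (j - t + 3) := by ring
      rw [this]
    · simp only [N3, if_neg h, zero_mul, mul_zero]
      have h1 : 0 ≤ (j - t + 2) * (j - t + 3) := by
        have := consec_nonneg (j - t + 2)
        linarith [this]
      exact mul_nonneg h1 (Int.natCast_nonneg _)
  have hN : 2 * N3 (t - 1) = t * (t + 1) := by
    simp only [N3, if_pos (by linarith : (0:ℤ) ≤ t - 1)]
    rw [show t - 1 + 1 = t by ring, show t - 1 + 2 = t + 1 by ring]
    exact Int.mul_ediv_cancel' (Int.even_mul_succ_self t).two_dvd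
  calc t * (t + 1) = 2 * N3 (t - 1) := hN.symm
    _ = ∑ j ∈ Finset.Icc q c, 2 * (N3 (j - t + 1) * (s j : ℤ)) := by
        rw [hyp, Finset.mul_sum]
    _ ≤ _ := Finset.sum_le_sum key
end

section
/- Let t ≥ 1, q ≤ c be integers with t ≤ q, and s_q, ..., s_c natural numbers with s_c > 0. If ∑_{j=q}^{c} (j−t+1)(j−t+3) s_j ≥ t(t+2), then t(t+1)(t+2) + ∑_{j=q}^{c} (j−t+1)(j−t+2)(j−t+3) s_j ≥ t(t+2)(q+3). -/
/-- If ∑_{j=q}^{c} (j−t+1)(j−t+3) s_j ≥ t(t+2), then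
    t(t+2)(q+3) ≤ t(t+1)(t+2) + ∑_{j=q}^{c} (j−t+1)(j−t+2)(j−t+3) s_j. -/
theorem compressed_lower_case (t q c : ℤ) (s : ℤ → ℕ)
    (ht : 1 ≤ t) (htq : t ≤ q) (hqc : q ≤ c) (hsc : 0 < s c)
    (hyp : t * (t + 2) ≤ ∑ j ∈ Finset.Icc q c, (j - t + 1) * (j - t + 3) * (s j : ℤ)) :
    t * (t + 2) * (q + 3) ≤
      t * (t + 1) * (t + 2) +
        ∑ j ∈ Finset.Icc q c, (j - t + 1) * (j - t + 2) * (j - t + 3) * (s j : ℤ) := by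
  have key : (q - t + 2) * ∑ j ∈ Finset.Icc q c, (j - t + 1) * (j - t + 3) * (s j : ℤ) ≤
      ∑ j ∈ Finset.Icc q c, (j - t + 1) * (j - t + 2) * (j - t + 3) * (s j : ℤ) := by
    rw [Finset.mul_sum]
    apply Finset.sum_le_sum
    intro j hj
    have hqj : q ≤ j := (Finset.mem_Icc.mp hj).1
    have hs : (0 : ℤ) ≤ (s j : ℤ) := Int.natCast_nonneg _
    nlinarith [mul_nonneg (mul_nonneg (by linarith : (0:ℤ) ≤ j - t + 1) (by linarith : (0:ℤ) ≤ j - t + 3)) hs,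
      mul_nonneg (mul_nonneg (mul_nonneg (by linarith : (0:ℤ) ≤ j - q) (by linarith : (0:ℤ) ≤ j - t + 1)) (by linarith : (0:ℤ) ≤ j - t + 3)) hs]
  have h2 : (q - t + 2) * (t * (t + 2)) ≤
      (q - t + 2) * ∑ j ∈ Finset.Icc q c, (j - t + 1) * (j - t + 3) * (s j : ℤ) :=
    mul_le_mul_of_nonneg_left hyp (by linarith)
  nlinarith [h2, key]
end

section
/- For the h-vector h = (1, 3, 6, 10, 15, 21, 13, 7, 3, 1) of socle degree c = 9, with t = 6 (smallest n with f(n) < 0) and i = 7 (smallest n with f(n) > 0), the multiplicity e = 80 is strictly less than t·i·(c+3)/6 = 6·7·12/6 = 84. -/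
/-- The h-vector (1, 3, 6, 10, 15, 21, 13, 7, 3, 1), indexed by integers. -/
def h14 : ℤ → ℤ := fun k =>
  if k = 0 then 1 else if k = 1 then 3 else if k = 2 then 6 else
  if k = 3 then 10 else if k = 4 then 15 else if k = 5 then 21 else
  if k = 6 then 13 else if k = 7 then 7 else if k = 8 then 3 else
  if k = 9 then 1 else 0

/-- f(n) = h_n − 3h_{n−1} + 3h_{n−2} − h_{n−3}. -/
def f14 (n : ℤ) : ℤ := h14 n - 3 * h14 (n - 1) + 3 * h14 (n - 2) - h14 (n - 3)

lemma h14_zero_of_neg {n : ℤ} (h : n < 0) : h14 n = 0 := by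
  unfold h14; split_ifs <;> omega

lemma f14_zero_of_neg {n : ℤ} (h : n < 0) : f14 n = 0 := by
  unfold f14
  rw [h14_zero_of_neg h, h14_zero_of_neg (by omega), h14_zero_of_neg (by omega),
    h14_zero_of_neg (by omega)]
  ring

/-- For h = (1,3,6,10,15,21,13,7,3,1), with t = 6 and i = 7, the multiplicity
    e = 80 is strictly less than t·i·(c+3)/6 = 6·7·12/6 = 84. -/
theorem example_extremely_compressed_counterexample :
    (∀ n : ℤ, 1 ≤ n → n < 6 → 0 ≤ f14 n) ∧
    (f14 6 < 0 ∧ ∀ n : ℤ, f14 n < 0 → 6 ≤ n) ∧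
    (0 < f14 7 ∧ ∀ n : ℤ, 1 ≤ n → 0 < f14 n → 7 ≤ n) ∧
    (∑ k ∈ Finset.Icc (0 : ℤ) 9, h14 k = 80) ∧
    (6 * 7 * 12 / 6 = (84 : ℤ)) ∧ (80 : ℤ) < 84 := by
  refine ⟨?_, ⟨by decide, ?_⟩, ⟨by decide, ?_⟩, ?_, by norm_num, by norm_num⟩
  · intro n h1 h2
    interval_cases n <;> decide
  · intro n hn
    by_contra hlt
    push_neg at hlt
    rcases lt_or_ge n 0 with h | h
    · rw [f14_zero_of_neg h] at hn; omega
    · interval_cases n <;> revert hn <;> decide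
  · intro n h1 hn
    by_contra hlt
    push_neg at hlt
    interval_cases n <;> revert hn <;> decide
  · decide
end

section
/- Let q ≤ c and t be positive integers with t ≤ q, and s_q, ..., s_c natural numbers with s_c > 0, satisfying N(3,t−1) = ∑_{j=q}^{c} N(3, j−t+1) s_j where N(3,d) = (d+1)(d+2)/2 (and N(3,d) = 0 for d < 0). Then N(4,t−1) + ∑_{j=q}^{c} N(4, j−t) s_j ≤ t(t+1)(c+3)/6, where N(4,d) = C(d+3,3) (and 0 for d < 0). -/
/-! Termwise `6 N(4,j-t) ≤ (c-t+1) · 2 N(3,j-t+1)`, since `j-t+1 ≤ c-t+1`. Summing against the `s_j`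
and applying the hypothesis bounds `6 ∑ N(4,j-t) s_j` by `(c-t+1) · t(t+1)`, and
`t(t+1)(t+2) + (c-t+1) t(t+1) = t(t+1)(c+3)`. -/

/-- N(3,d) = (d+1)(d+2)/2 for d ≥ 0, and 0 for d < 0. -/
def N3' (d : ℤ) : ℤ := if 0 ≤ d then (d + 1) * (d + 2) / 2 else 0

/-- N(4,d) = (d+1)(d+2)(d+3)/6 for d ≥ 0, and 0 for d < 0. -/
def N4' (d : ℤ) : ℤ := if 0 ≤ d then (d + 1) * (d + 2) * (d + 3) / 6 else 0

lemma two_dvd_add_one_mul_add_two (d : ℤ) : (2 : ℤ) ∣ (d + 1) * (d + 2) := by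
  refine (ZMod.intCast_zmod_eq_zero_iff_dvd _ 2).mp ?_
  push_cast
  exact (by decide : ∀ z : ZMod 2, (z + 1) * (z + 2) = 0) d

lemma six_dvd_add_one_mul_add_two_mul_add_three (d : ℤ) :
    (6 : ℤ) ∣ (d + 1) * (d + 2) * (d + 3) := by
  refine (ZMod.intCast_zmod_eq_zero_iff_dvd _ 6).mp ?_
  push_cast
  exact (by decide : ∀ z : ZMod 6, (z + 1) * (z + 2) * (z + 3) = 0) d

lemma two_mul_N3'_of_nonneg {d : ℤ} (hd : 0 ≤ d) : 2 * N3' d = (d + 1) * (d + 2) := by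
  rw [N3', if_pos hd, Int.mul_ediv_cancel' (two_dvd_add_one_mul_add_two d)]

lemma six_mul_N4'_of_nonneg {d : ℤ} (hd : 0 ≤ d) : 6 * N4' d = (d + 1) * (d + 2) * (d + 3) := by
  rw [N4', if_pos hd, Int.mul_ediv_cancel' (six_dvd_add_one_mul_add_two_mul_add_three d)]

lemma N3'_nonneg (d : ℤ) : 0 ≤ N3' d := by
  unfold N3'
  split_ifs with hd
  · exact Int.ediv_nonneg (by positivity) (by norm_num)
  · rfl

lemma six_mul_N4'_le {d m : ℤ} (hdm : d ≤ m) : 6 * N4' d ≤ (m + 1) * (2 * N3' (d + 1)) := by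
  rcases lt_or_ge d 0 with hd | hd
  · rw [N4', if_neg hd.not_ge, mul_zero]
    by_cases hd' : 0 ≤ d + 1
    · exact mul_nonneg (by omega) (by linarith [N3'_nonneg (d + 1)])
    · rw [N3', if_neg hd', mul_zero, mul_zero]
  · rw [six_mul_N4'_of_nonneg hd, two_mul_N3'_of_nonneg (by omega)]
    have : 0 ≤ (d + 1 + 1) * (d + 1 + 2) := by positivity
    nlinarith

lemma six_mul_sum_N4'_le {t c : ℤ} (S : Finset ℤ) (hS : ∀ j ∈ S, j ≤ c) (s : ℤ → ℕ) :
    6 * ∑ j ∈ S, N4' (j - t) * (s j : ℤ) ≤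
      (c - t + 1) * (2 * ∑ j ∈ S, N3' (j - t + 1) * (s j : ℤ)) := by
  simp only [Finset.mul_sum, ← mul_assoc]
  refine Finset.sum_le_sum fun j hj ↦ mul_le_mul_of_nonneg_right ?_ (Int.natCast_nonneg _)
  rw [mul_assoc]
  exact six_mul_N4'_le (by linarith [hS j hj])

theorem extremely_compressed_upper_general (t q c : ℤ) (s : ℤ → ℕ)
    (ht : 1 ≤ t)
    (hyp : N3' (t - 1) = ∑ j ∈ Finset.Icc q c, N3' (j - t + 1) * (s j : ℤ)) :
    N4' (t - 1) + ∑ j ∈ Finset.Icc q c, N4' (j - t) * (s j : ℤ) ≤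
      t * (t + 1) * (c + 3) / 6 := by
  have hN4 : 6 * N4' (t - 1) = t * (t + 1) * (t + 2) := by
    rw [six_mul_N4'_of_nonneg (by omega)]; ring
  have hN3 : 2 * N3' (t - 1) = t * (t + 1) := by
    rw [two_mul_N3'_of_nonneg (by omega)]; ring
  have hsum := six_mul_sum_N4'_le (t := t) (Finset.Icc q c)
    (fun j hj ↦ (Finset.mem_Icc.mp hj).2) s
  rw [← hyp, hN3] at hsum
  rw [Int.le_ediv_iff_mul_le (by norm_num)]
  linarith

/-- If N(3,t−1) = ∑_{j=q}^{c} N(3,j−t+1) s_j, then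
    N(4,t−1) + ∑_{j=q}^{c} N(4,j−t) s_j ≤ t(t+1)(c+3)/6. -/
theorem extremely_compressed_upper (t q c : ℤ) (s : ℤ → ℕ)
    (ht : 1 ≤ t) (hq : 1 ≤ q) (htq : t ≤ q) (hqc : q ≤ c) (hsc : 0 < s c)
    (hyp : N3' (t - 1) = ∑ j ∈ Finset.Icc q c, N3' (j - t + 1) * (s j : ℤ)) :
    N4' (t - 1) + ∑ j ∈ Finset.Icc q c, N4' (j - t) * (s j : ℤ) ≤
      t * (t + 1) * (c + 3) / 6 :=
  extremely_compressed_upper_general t q c s ht hyp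
end
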